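/- Let J : ℂⁿ → ℂⁿ be an ℝ-linear map with det(J_st + J) ≠ 0, where J_st denotes multiplication by i. Define Q = (J_st + J)⁻¹ ∘ (J_st − J). Then J² = −I if and only if Q ∘ J_st + J_st ∘ Q = 0, i.e. Q is complex anti-linear. -/

import Mathlib

/-!
With `A = J_st` and `S = A + J`, so that `S Q = A - J`, two identities in the endomorphism ring
drive the proof:
`S (S Q + Q S) = S (A - J) + (A - J) S = -2 (1 + J²)` and `(S Q + Q S)(1 + Q) = 2 (Q A + A Q)`,
the latter because `S (1 + Q) = 2 A`. Since `S` and `1 + Q = S⁻¹ (2 A)` are units, `J² = -1`,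
`S Q + Q S = 0` and `Q A + A Q = 0` are all equivalent.
-/

noncomputable def Jstd (n : ℕ) : (Fin n → ℂ) →ₗ[ℝ] (Fin n → ℂ) :=
  LinearMap.restrictScalars ℝ (Complex.I • (LinearMap.id : (Fin n → ℂ) →ₗ[ℂ] (Fin n → ℂ)))

section Ring

variable {R : Type*} [Ring R] {a j q : R}

theorem add_mul_add_one_eq_two_mul (hq : (a + j) * q = a - j) : (a + j) * (1 + q) = 2 * a := by
  rw [mul_add, hq]; noncomm_ring

theorem mul_anticomm_eq_neg_two_mul_one_add_mul_self (ha : a * a = -1)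
    (hq : (a + j) * q = a - j) :
    (a + j) * ((a + j) * q + q * (a + j)) = -2 * (1 + j * j) := by
  rw [mul_add, hq, ← mul_assoc, hq]
  calc (a + j) * (a - j) + (a - j) * (a + j) = 2 * (a * a) - 2 * (j * j) := by noncomm_ring
    _ = -2 * (1 + j * j) := by rw [ha, mul_add, mul_one, mul_neg_one, neg_mul, sub_eq_add_neg]

theorem anticomm_mul_one_add_eq_two_mul_anticomm (hq : (a + j) * q = a - j) :
    ((a + j) * q + q * (a + j)) * (1 + q) = 2 * (q * a + a * q) := by
  have hs := add_mul_add_one_eq_two_mul hq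
  calc ((a + j) * q + q * (a + j)) * (1 + q)
      = q * ((a + j) * (1 + q)) + ((a + j) * (1 + q)) * q := by noncomm_ring
    _ = 2 * (q * a + a * q) := by rw [hs]; noncomm_ring

theorem mul_self_eq_neg_one_iff_anticomm_eq_zero (ha : a * a = -1) (hs : IsUnit (a + j))
    (hq : (a + j) * q = a - j) (h2 : IsUnit (2 : R)) :
    j * j = -1 ↔ q * a + a * q = 0 := by
  have ha_unit : IsUnit a :=
    ⟨⟨a, -a, by rw [mul_neg, ha, neg_neg], by rw [neg_mul, ha, neg_neg]⟩, rfl⟩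
  have hq_unit : IsUnit (1 + q) := by
    have h : 1 + q = hs.unit⁻¹ * (2 * a) := by
      rw [← add_mul_add_one_eq_two_mul hq, ← mul_assoc, IsUnit.val_inv_mul, one_mul]
    rw [h]
    exact hs.unit⁻¹.isUnit.mul (h2.mul ha_unit)
  calc j * j = -1 ↔ -2 * (1 + j * j) = 0 := by
        rw [h2.neg.mul_right_eq_zero, add_eq_zero_iff_eq_neg']
    _ ↔ (a + j) * q + q * (a + j) = 0 := by
        rw [← mul_anticomm_eq_neg_two_mul_one_add_mul_self ha hq, hs.mul_right_eq_zero]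
    _ ↔ 2 * (q * a + a * q) = 0 := by
        rw [← anticomm_mul_one_add_eq_two_mul_anticomm hq, hq_unit.mul_left_eq_zero]
    _ ↔ q * a + a * q = 0 := h2.mul_right_eq_zero

end Ring

theorem Jstd_mul_self (n : ℕ) : Jstd n * Jstd n = -1 := by
  ext v i
  simp [Jstd, ← mul_assoc]

/-- If `J_st + J` is invertible and `Q = (J_st + J)⁻¹ ∘ (J_st − J)`, then `J² = −I`
iff `Q ∘ J_st + J_st ∘ Q = 0`, i.e. `Q` is complex anti-linear. -/
theorem stmt0 (n : ℕ) (J Q : (Fin n → ℂ) →ₗ[ℝ] (Fin n → ℂ))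
    (hinv : Function.Bijective (Jstd n + J))
    (hQ : (Jstd n + J) ∘ₗ Q = Jstd n - J) :
    J ∘ₗ J = -LinearMap.id ↔ Q ∘ₗ Jstd n + Jstd n ∘ₗ Q = 0 := by
  have h2 : IsUnit (2 : Module.End ℝ (Fin n → ℂ)) := by
    simpa only [map_ofNat] using
      (IsUnit.mk0 (2 : ℝ) two_ne_zero).map (algebraMap ℝ (Module.End ℝ (Fin n → ℂ)))
  exact mul_self_eq_neg_one_iff_anticomm_eq_zero (Jstd_mul_self n)
    ((Module.End.isUnit_iff _).mpr hinv) hQ h2
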